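/- arXiv:1507.02378 — 2 statements merged into one kernel-verified Lean document; each statement's English description precedes it below -/
import Mathlib

section
/- Let (V, r, par) be a finite rooted tree and ℓ, w : V → ℝ. If X and Y are covered service subtrees (with respect to w), then X ∪ Y is a covered service subtree. -/
open scoped Classical

/-- `u` is a descendant of `v` (equivalently, `v` is an ancestor of `u`). -/
def IsDesc {V : Type*} (par : V → V) (u v : V) : Prop := ∃ n : ℕ, par^[n] u = v

/-- `Z` is a subtree rooted at `v`. -/
def IsSubtree {V : Type*} [DecidableEq V] (par : V → V) (v : V) (Z : Finset V) : Prop :=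
  v ∈ Z ∧ (∀ u ∈ Z, IsDesc par u v) ∧ ∀ u ∈ Z, u ≠ v → par u ∈ Z

/-- `Z` is a covered subtree rooted at `z` (with respect to the waiting costs `w`):
it is a subtree rooted at `z` and every proper induced subtree `Z ∩ desc(x)`,
`x ∈ Z`, `x ≠ z`, is mature, i.e. its waiting cost is at least its weight. -/
def Covered {V : Type*} [Fintype V] [DecidableEq V] (par : V → V) (ℓ w : V → ℝ)
    (z : V) (Z : Finset V) : Prop :=
  IsSubtree par z Z ∧ ∀ x ∈ Z, x ≠ z →
    ∑ u ∈ Z.filter (fun u => IsDesc par u x), ℓ u ≤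
      ∑ u ∈ Z.filter (fun u => IsDesc par u x), w u

/-!
Fix `x ∈ X`, `x ≠ r`. A node of `(X ∪ Y) ∩ desc x` outside `X` lies in `Y ∩ desc t` for a unique
`t ∈ Y \ X` whose parent is in `X` (its highest ancestor outside `X`), and the sets
`Y ∩ desc t` for distinct such `t` are disjoint. Hence `(X ∪ Y) ∩ desc x` splits into
`X ∩ desc x` and these sets, each of which satisfies `ℓ ≤ w` because `X` resp. `Y` is covered
(and `t ≠ r` since `r ∈ X`).
-/

open Finset

section Tree

variable {V : Type*} {par : V → V}

theorem IsDesc.refl (u : V) : IsDesc par u u := ⟨0, rfl⟩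

theorem IsDesc.trans {u v x : V} (huv : IsDesc par u v) (hvx : IsDesc par v x) :
    IsDesc par u x := by
  obtain ⟨n, rfl⟩ := huv
  obtain ⟨m, rfl⟩ := hvx
  exact ⟨m + n, Function.iterate_add_apply par m n u⟩

theorem IsDesc.of_par {u v : V} (h : IsDesc par (par u) v) : IsDesc par u v :=
  (show IsDesc par u (par u) from ⟨1, rfl⟩).trans h

theorem IsDesc.total {u a b : V} (ha : IsDesc par u a) (hb : IsDesc par u b) :
    IsDesc par a b ∨ IsDesc par b a := by
  obtain ⟨n, rfl⟩ := ha
  obtain ⟨m, rfl⟩ := hb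
  rcases le_total n m with h | h
  · exact .inl ⟨m - n, by rw [← Function.iterate_add_apply, Nat.sub_add_cancel h]⟩
  · exact .inr ⟨n - m, by rw [← Function.iterate_add_apply, Nat.sub_add_cancel h]⟩

theorem exists_isDesc_not_mem_par_mem {X : Set V} {u x : V} (hu : u ∉ X)
    (hux : IsDesc par u x) (hx : x ∈ X) :
    ∃ t, IsDesc par u t ∧ IsDesc par t x ∧ t ∉ X ∧ par t ∈ X := by
  obtain ⟨n, hn⟩ := hux
  induction n generalizing u with
  | zero => exact absurd (hn ▸ hx : par^[0] u ∈ X) hu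
  | succ n ih =>
    by_cases hpu : par u ∈ X
    · exact ⟨u, .refl u, ⟨n + 1, hn⟩, hu, hpu⟩
    · obtain ⟨t, hut, htx, ht⟩ := ih hpu hn
      exact ⟨t, hut.of_par, htx, ht⟩

theorem IsSubtree.union [DecidableEq V] {z : V} {X Y : Finset V} (hX : IsSubtree par z X)
    (hY : IsSubtree par z Y) : IsSubtree par z (X ∪ Y) := by
  refine ⟨mem_union_left _ hX.1, fun u hu => ?_, fun u hu hne => ?_⟩
  · exact (mem_union.1 hu).elim (hX.2.1 u) (hY.2.1 u)
  · exact mem_union.2 <| (mem_union.1 hu).imp (hX.2.2 u · hne) (hY.2.2 u · hne)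

variable [DecidableEq V] {r : V} {Z : Finset V}

theorem IsSubtree.iterate_mem (hroot : par r = r) (hZ : IsSubtree par r Z) {u : V}
    (hu : u ∈ Z) (k : ℕ) : par^[k] u ∈ Z := by
  induction k with
  | zero => exact hu
  | succ k ih =>
    rw [Function.iterate_succ_apply']
    by_cases h : par^[k] u = r
    · rw [h, hroot]; exact hZ.1
    · exact hZ.2.2 _ ih h

theorem IsSubtree.mem_of_isDesc (hroot : par r = r) (hZ : IsSubtree par r Z) {u t : V}
    (hu : u ∈ Z) (hut : IsDesc par u t) : t ∈ Z := by
  obtain ⟨k, rfl⟩ := hut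
  exact hZ.iterate_mem hroot hu k

theorem IsSubtree.eq_of_isDesc_of_par_mem (hroot : par r = r) (hZ : IsSubtree par r Z)
    {u t₁ t₂ : V} (ht₁ : t₁ ∉ Z) (hpt₁ : par t₁ ∈ Z) (ht₂ : t₂ ∉ Z) (hpt₂ : par t₂ ∈ Z)
    (hu₁ : IsDesc par u t₁) (hu₂ : IsDesc par u t₂) : t₁ = t₂ := by
  have of_isDesc : ∀ {a b : V}, par a ∈ Z → b ∉ Z → IsDesc par a b → a = b := by
    rintro a b hpa hb ⟨_ | k, rfl⟩
    · rfl
    · exact absurd (hZ.iterate_mem hroot hpa k) hb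
  rcases hu₁.total hu₂ with h | h
  · exact of_isDesc hpt₁ ht₂ h
  · exact (of_isDesc hpt₂ ht₁ h).symm

noncomputable def exitNodes (par : V → V) (X Y : Finset V) (x : V) : Finset V :=
  (Y \ X).filter fun t => par t ∈ X ∧ IsDesc par t x

theorem filter_isDesc_union_eq (hroot : par r = r) {X Y : Finset V} (hY : IsSubtree par r Y)
    {x : V} (hx : x ∈ X) :
    (X ∪ Y).filter (fun u => IsDesc par u x) =
      X.filter (fun u => IsDesc par u x) ∪
        (exitNodes par X Y x).biUnion fun t => Y.filter fun u => IsDesc par u t := by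
  ext u
  simp only [exitNodes, mem_union, mem_filter, mem_biUnion, mem_sdiff]
  constructor
  · rintro ⟨huX | huY, hux⟩
    · exact .inl ⟨huX, hux⟩
    by_cases huX : u ∈ X
    · exact .inl ⟨huX, hux⟩
    obtain ⟨t, hut, htx, htX, hpt⟩ := exists_isDesc_not_mem_par_mem (X := (X : Set V)) huX hux hx
    exact .inr ⟨t, ⟨⟨hY.mem_of_isDesc hroot huY hut, htX⟩, hpt, htx⟩, huY, hut⟩
  · rintro (⟨huX, hux⟩ | ⟨t, ⟨_, _, htx⟩, huY, hut⟩)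
    · exact ⟨.inl huX, hux⟩
    · exact ⟨.inr huY, hut.trans htx⟩

theorem sum_filter_isDesc_union (hroot : par r = r) {X Y : Finset V} (hX : IsSubtree par r X)
    (hY : IsSubtree par r Y) {x : V} (hx : x ∈ X) (f : V → ℝ) :
    ∑ u ∈ (X ∪ Y).filter (fun u => IsDesc par u x), f u =
      ∑ u ∈ X.filter (fun u => IsDesc par u x), f u +
        ∑ t ∈ exitNodes par X Y x, ∑ u ∈ Y.filter (fun u => IsDesc par u t), f u := by
  have hdisj : Disjoint (X.filter fun u => IsDesc par u x)
      ((exitNodes par X Y x).biUnion fun t => Y.filter fun u => IsDesc par u t) := by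
    simp only [disjoint_left, mem_filter, mem_biUnion, exitNodes, mem_sdiff]
    rintro u ⟨huX, -⟩ ⟨t, ⟨⟨-, htX⟩, -⟩, -, hut⟩
    exact htX (hX.mem_of_isDesc hroot huX hut)
  have hpairwise : (exitNodes par X Y x : Set V).PairwiseDisjoint
      fun t => Y.filter fun u => IsDesc par u t := by
    intro t₁ ht₁ t₂ ht₂ hne
    simp only [coe_filter, exitNodes, mem_sdiff, Set.mem_ofPred_eq] at ht₁ ht₂
    simp only [Function.onFun, disjoint_left, mem_filter]
    rintro u ⟨-, hu₁⟩ ⟨-, hu₂⟩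
    exact hne (hX.eq_of_isDesc_of_par_mem hroot ht₁.1.2 ht₁.2.1 ht₂.1.2 ht₂.2.1 hu₁ hu₂)
  rw [filter_isDesc_union_eq hroot hY hx, sum_union hdisj, sum_biUnion hpairwise]

theorem Covered.sum_le_of_mem_left [Fintype V] {ℓ w : V → ℝ} (hroot : par r = r)
    {X Y : Finset V} (hX : Covered par ℓ w r X) (hY : Covered par ℓ w r Y) {x : V}
    (hx : x ∈ X) (hxr : x ≠ r) :
    ∑ u ∈ (X ∪ Y).filter (fun u => IsDesc par u x), ℓ u ≤
      ∑ u ∈ (X ∪ Y).filter (fun u => IsDesc par u x), w u := by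
  rw [sum_filter_isDesc_union hroot hX.1 hY.1 hx, sum_filter_isDesc_union hroot hX.1 hY.1 hx]
  refine add_le_add (hX.2 x hx hxr) (sum_le_sum fun t ht => ?_)
  obtain ⟨htYX, -⟩ := mem_filter.1 ht
  obtain ⟨htY, htX⟩ := mem_sdiff.1 htYX
  exact hY.2 t htY fun htr => htX (htr ▸ hX.1.1)

end Tree

theorem stmt5_general {V : Type*} [Fintype V] [DecidableEq V]
    (r : V) (par : V → V) (hroot : par r = r)
    (ℓ w : V → ℝ)
    (X Y : Finset V) (hX : Covered par ℓ w r X) (hY : Covered par ℓ w r Y) :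
    Covered par ℓ w r (X ∪ Y) := by
  refine ⟨hX.1.union hY.1, fun x hx hxr => ?_⟩
  rcases mem_union.1 hx with hxX | hxY
  · exact hX.sum_le_of_mem_left hroot hY hxX hxr
  · rw [union_comm]
    exact hY.sum_le_of_mem_left hroot hX hxY hxr

/-- Lemma `Ot unique`: the union of two covered service subtrees is a covered
service subtree. -/
theorem stmt5 {V : Type*} [Fintype V] [DecidableEq V]
    (r : V) (par : V → V) (hroot : par r = r) (hreach : ∀ v, ∃ n : ℕ, par^[n] v = r)
    (ℓ w : V → ℝ)
    (X Y : Finset V) (hX : Covered par ℓ w r X) (hY : Covered par ℓ w r Y) :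
    Covered par ℓ w r (X ∪ Y) :=
  stmt5_general r par hroot ℓ w X Y hX hY
end

section
/- Let (V, r, par) be a finite rooted tree, ℓ : V → ℝ with ℓ r = 0 and ℓ u ≥ 0 for all u, and w : V → ℝ with w u ≥ 0 for all u. Let O be the inclusion-maximal covered service subtree (with respect to w). Then O minimizes cost over service subtrees: for every service subtree X, ℓ(O) + ∑_{u∉O} w u ≤ ℓ(X) + ∑_{u∉X} w u. -/
open scoped Classical

/-!
Write `cost X = ℓ(X) + w(Xᶜ)`. For a service subtree `X`, the nodes of `O \ X` fall into the
pieces `O ∩ desc x` hanging off `X`; each is covered, so grafting them onto `X` one at a time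
does not increase the cost, and `cost (X ∪ O) ≤ cost X`. Conversely, as long as a service
subtree `Y ⊋ O` remains, `Y` is not covered by maximality of `O`, which exhibits a piece of
`Y \ O` on which `ℓ` exceeds `w`; pruning such pieces one at a time shows
`cost O ≤ cost (X ∪ O)`.
-/

open Finset

theorem Finset.sum_le_sum_of_peel {ι M : Type*} [DecidableEq ι] [AddCommMonoid M]
    [PartialOrder M] [IsOrderedAddMonoid M] {f g : ι → M} (P : Finset ι → Prop)
    (peel : ∀ S, P S → S.Nonempty →
      ∃ D ⊆ S, D.Nonempty ∧ ∑ i ∈ D, f i ≤ ∑ i ∈ D, g i ∧ P (S \ D))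
    {S : Finset ι} (hS : P S) : ∑ i ∈ S, f i ≤ ∑ i ∈ S, g i := by
  induction S using Finset.strongInduction with
  | H S ih =>
    rcases S.eq_empty_or_nonempty with rfl | hne
    · simp
    obtain ⟨D, hDS, hD, hfg, hP⟩ := peel S hS hne
    rw [← sum_sdiff hDS, ← sum_sdiff hDS (f := g)]
    exact add_le_add (ih _ (sdiff_ssubset hDS hD) hP) hfg

section

variable {V : Type*} {par : V → V}

namespace IsDesc

theorem refl_s7 (u : V) : IsDesc par u u := ⟨0, rfl⟩

theorem self_par (u : V) : IsDesc par u (par u) := ⟨1, rfl⟩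

theorem trans_s7 {u v x : V} (h₁ : IsDesc par u v) (h₂ : IsDesc par v x) : IsDesc par u x := by
  obtain ⟨m, rfl⟩ := h₁
  obtain ⟨n, rfl⟩ := h₂
  exact ⟨n + m, Function.iterate_add_apply par n m u⟩

theorem par_of_ne {u x : V} (h : IsDesc par u x) (hu : u ≠ x) : IsDesc par (par u) x := by
  obtain ⟨_ | n, rfl⟩ := h
  · exact absurd rfl hu
  · exact ⟨n, (Function.iterate_succ_apply par n u).symm⟩

theorem exists_boundary {p : V → Prop} {u v : V} (h : IsDesc par u v) (hu : ¬ p u)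
    (hv : p v) : ∃ x, IsDesc par u x ∧ ¬ p x ∧ p (par x) := by
  obtain ⟨n, rfl⟩ := h
  induction n generalizing u with
  | zero => exact absurd hv hu
  | succ n ih =>
    by_cases hpu : p (par u)
    · exact ⟨u, refl_s7 u, hu, hpu⟩
    obtain ⟨x, hux, hx⟩ := ih hpu (by rwa [Function.iterate_succ_apply] at hv)
    exact ⟨x, (self_par u).trans_s7 hux, hx⟩

end IsDesc

namespace IsSubtree

variable [DecidableEq V] {r v x : V} {X Y Z : Finset V}

theorem mem_of_isDesc_s7 (hroot : par r = r) (hZ : IsSubtree par r Z) {u : V} (hu : u ∈ Z)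
    (h : IsDesc par u v) : v ∈ Z := by
  obtain ⟨n, rfl⟩ := h
  induction n generalizing u with
  | zero => exact hu
  | succ n ih =>
    by_cases hur : u = r
    · subst hur
      rwa [Function.iterate_fixed hroot]
    · exact ih (hZ.2.2 u hu hur)

theorem union_s7 (hX : IsSubtree par v X) (hY : IsSubtree par v Y) : IsSubtree par v (X ∪ Y) := by
  refine ⟨mem_union_left _ hX.1, ?_, ?_⟩
  · simp only [mem_union]
    rintro u (hu | hu)
    exacts [hX.2.1 u hu, hY.2.1 u hu]
  · simp only [mem_union]
    rintro u (hu | hu) huv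
    exacts [.inl (hX.2.2 u hu huv), .inr (hY.2.2 u hu huv)]

theorem union_filter_isDesc (hX : IsSubtree par r X) (hZ : IsSubtree par r Z)
    (hpx : par x ∈ X) : IsSubtree par r (X ∪ Z.filter (IsDesc par · x)) := by
  refine ⟨mem_union_left _ hX.1, ?_, ?_⟩
  · simp only [mem_union, mem_filter]
    rintro u (hu | hu)
    exacts [hX.2.1 u hu, hZ.2.1 u hu.1]
  · simp only [mem_union, mem_filter]
    rintro u (hu | ⟨hu, hux⟩) hur
    · exact .inl (hX.2.2 u hu hur)
    by_cases hx : u = x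
    · exact .inl (hx ▸ hpx)
    · exact .inr ⟨hZ.2.2 u hu hur, hux.par_of_ne hx⟩

theorem sdiff {E : Finset V} (hY : IsSubtree par r Y) (hr : r ∉ E)
    (hE : ∀ u ∈ Y, u ≠ r → par u ∈ E → u ∈ E) : IsSubtree par r (Y \ E) := by
  refine ⟨mem_sdiff.2 ⟨hY.1, hr⟩, fun u hu => hY.2.1 u (mem_sdiff.1 hu).1, ?_⟩
  intro u hu hur
  rw [mem_sdiff] at hu ⊢
  exact ⟨hY.2.2 u hu.1 hur, fun hpu => hu.2 (hE u hu.1 hur hpu)⟩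

end IsSubtree

namespace Covered

variable [Fintype V] [DecidableEq V] {r : V} {ℓ w : V → ℝ} {O X Y : Finset V}

theorem sum_sdiff_le (hroot : par r = r) (hO : Covered par ℓ w r O)
    (hX : IsSubtree par r X) : ∑ u ∈ O \ X, ℓ u ≤ ∑ u ∈ O \ X, w u := by
  refine sum_le_sum_of_peel (fun S => ∃ X, IsSubtree par r X ∧ S = O \ X) ?_ ⟨X, hX, rfl⟩
  rintro _ ⟨X, hX, rfl⟩ ⟨u, hu⟩
  rw [mem_sdiff] at hu
  obtain ⟨x, hux, hxX, hpx⟩ := (hO.1.2.1 u hu.1).exists_boundary (p := (· ∈ X)) hu.2 hX.1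
  have hxO : x ∈ O := hO.1.mem_of_isDesc_s7 hroot hu.1 hux
  have hDsub : O.filter (IsDesc par · x) ⊆ O \ X := fun v hv =>
    mem_sdiff.2 ⟨(mem_filter.1 hv).1,
      fun hvX => hxX (hX.mem_of_isDesc_s7 hroot hvX (mem_filter.1 hv).2)⟩
  refine ⟨_, hDsub, ⟨x, mem_filter.2 ⟨hxO, .refl x⟩⟩, hO.2 x hxO fun h => hxX (h ▸ hX.1),
    _, hX.union_filter_isDesc hO.1 hpx, sdiff_sdiff_left⟩

theorem sum_sdiff_le_of_maximal (hroot : par r = r) (hO : Covered par ℓ w r O)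
    (hOmax : ∀ Z, Covered par ℓ w r Z → Z ⊆ O) (hY : IsSubtree par r Y) (hOY : O ⊆ Y) :
    ∑ u ∈ Y \ O, w u ≤ ∑ u ∈ Y \ O, ℓ u := by
  refine sum_le_sum_of_peel (fun S => ∃ Y, IsSubtree par r Y ∧ O ⊆ Y ∧ S = Y \ O) ?_
    ⟨Y, hY, hOY, rfl⟩
  rintro _ ⟨Y, hY, hOY, rfl⟩ hne
  have hYcov : ¬ Covered par ℓ w r Y := fun h =>
    hne.ne_empty (sdiff_eq_empty_iff_subset.2 (hOmax Y h))
  obtain ⟨x, hxY, hxr, hlt⟩ : ∃ x ∈ Y, x ≠ r ∧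
      ∑ u ∈ Y.filter (IsDesc par · x), w u < ∑ u ∈ Y.filter (IsDesc par · x), ℓ u := by
    simpa [Covered, hY] using hYcov
  have hOx : ∑ u ∈ Y.filter (IsDesc par · x) ∩ O, ℓ u ≤
      ∑ u ∈ Y.filter (IsDesc par · x) ∩ O, w u := by
    rw [filter_inter, inter_eq_right.2 hOY]
    by_cases hxO : x ∈ O
    · exact hO.2 x hxO hxr
    · rw [filter_false_of_mem fun v hv hvx => hxO (hO.1.mem_of_isDesc_s7 hroot hv hvx), sum_empty,
        sum_empty]
  set E := Y.filter (IsDesc par · x) \ O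
  have hE : ∑ u ∈ E, w u < ∑ u ∈ E, ℓ u := by
    have hsplitℓ := sum_inter_add_sum_sdiff (Y.filter (IsDesc par · x)) O ℓ
    have hsplitw := sum_inter_add_sum_sdiff (Y.filter (IsDesc par · x)) O w
    linarith
  have hEO : Disjoint E O := sdiff_disjoint
  refine ⟨E, sdiff_subset_sdiff (filter_subset _ _) le_rfl,
    nonempty_iff_ne_empty.2 (by rintro h; simp [h] at hE), hE.le, Y \ E, ?_,
    fun v hv => mem_sdiff.2 ⟨hOY hv, disjoint_right.1 hEO hv⟩, sdiff_right_comm _ _ _⟩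
  refine hY.sdiff (disjoint_right.1 hEO hO.1.1) fun u hu hur hpu => ?_
  simp only [E, mem_sdiff, mem_filter] at hpu ⊢
  exact ⟨⟨hu, (IsDesc.self_par u).trans_s7 hpu.1.2⟩, fun huO => hpu.2 (hO.1.2.2 u huO hur)⟩

end Covered

end

theorem stmt7_general {V : Type*} [Fintype V] [DecidableEq V]
    (r : V) (par : V → V) (hroot : par r = r)
    (ℓ : V → ℝ) (w : V → ℝ)
    (O : Finset V) (hO : Covered par ℓ w r O)
    (hOmax : ∀ Z, Covered par ℓ w r Z → Z ⊆ O) :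
    ∀ X : Finset V, IsSubtree par r X →
      ∑ u ∈ O, ℓ u + ∑ u ∈ Oᶜ, w u ≤ ∑ u ∈ X, ℓ u + ∑ u ∈ Xᶜ, w u := by
  intro X hX
  have hcost (A : Finset V) :
      ∑ u ∈ A, ℓ u + ∑ u ∈ Aᶜ, w u = ∑ u, w u + ∑ u ∈ A, (ℓ u - w u) := by
    rw [sum_sub_distrib, ← sum_compl_add_sum A w]
    ring
  have hOX := hO.sum_sdiff_le hroot hX
  have hXO := hO.sum_sdiff_le_of_maximal hroot hOmax (hX.union_s7 hO.1) subset_union_right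
  rw [union_sdiff_right] at hXO
  rw [hcost, hcost, ← sum_inter_add_sum_sdiff O X, ← sum_inter_add_sum_sdiff X O, inter_comm]
  simp only [sum_sub_distrib]
  linarith

/-- The inclusion-maximal covered service subtree `O` minimizes
`cost(X) = ℓ(X) + ∑_{u∉X} w u` over all service subtrees `X`. -/
theorem stmt7 {V : Type*} [Fintype V] [DecidableEq V]
    (r : V) (par : V → V) (hroot : par r = r) (hreach : ∀ v, ∃ n : ℕ, par^[n] v = r)
    (ℓ : V → ℝ) (hℓr : ℓ r = 0) (hℓ : ∀ u, 0 ≤ ℓ u)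
    (w : V → ℝ) (hw : ∀ u, 0 ≤ w u)
    (O : Finset V) (hO : Covered par ℓ w r O)
    (hOmax : ∀ Z, Covered par ℓ w r Z → Z ⊆ O) :
    ∀ X : Finset V, IsSubtree par r X →
      ∑ u ∈ O, ℓ u + ∑ u ∈ Oᶜ, w u ≤ ∑ u ∈ X, ℓ u + ∑ u ∈ Xᶜ, w u :=
  stmt7_general r par hroot ℓ w O hO hOmax
end
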